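/- arXiv:2112.10869 — 4 statements merged into one kernel-verified Lean document; each statement's English description precedes it below -/
import Mathlib

section
/- Let T_i = T(ℓ_i, s_i) and T_j = T(ℓ_j, s_j) with delay indices ℓ_i, ℓ_j ∈ {0,…,M−1} and real Doppler exponents s_i, s_j (of the form k+κ with k ∈ {0,…,N−1}, κ ∈ (−1/2,1/2)). If ℓ_i ≢ ℓ_j (mod M), then every diagonal entry of T_i·T_j^† vanishes: [T_i T_j^†]_{(r,r)} = 0 for all r ∈ {0,…,MN−1} (Lemma 2). -/
open Matrix

noncomputable section

/-- Entry of the `N`-point unitary DFT matrix, written with natural-number indices: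
`(F_N)_{a,b} = (1/√N) exp(-2πi a b / N)`. -/
def dftEntry (N a b : ℕ) : ℂ :=
  (((Real.sqrt N)⁻¹ : ℝ) : ℂ) *
    Complex.exp (-(2 * Real.pi * Complex.I) * (a : ℂ) * (b : ℂ) / (N : ℂ))

/-- The Kronecker product `F_N ⊗ I_M`, realised on `Fin (M*N)` via the
correspondence `u ↔ (u / M, u % M)` (index `u` encodes the pair
`(a,b) = (u / M, u % M)` as `u = a·M + b`). -/
def FkronI (M N : ℕ) : Matrix (Fin (M * N)) (Fin (M * N)) ℂ :=
  Matrix.of fun u v =>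
    if (u : ℕ) % M = (v : ℕ) % M then dftEntry N ((u : ℕ) / M) ((v : ℕ) / M) else 0

/-- The cyclic-shift permutation matrix `Π` of size `K`:
`Π_{u,v} = 1` iff `u ≡ v + 1 (mod K)`. -/
def cyclicShift (K : ℕ) : Matrix (Fin K) (Fin K) ℂ :=
  Matrix.of fun u v => if ((v : ℕ) + 1) % K = (u : ℕ) then 1 else 0

/-- The diagonal matrix `Δ^s` of size `K`, with `(Δ^s)_{j,j} = exp(2πi s j / K)`. -/
def deltaPow (K : ℕ) (s : ℝ) : Matrix (Fin K) (Fin K) ℂ :=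
  Matrix.diagonal fun j => Complex.exp (2 * Real.pi * Complex.I * (s : ℂ) * ((j : ℕ) : ℂ) / (K : ℂ))

/-- The OTFS delay–Doppler matrix `T(ℓ,s) = (F_N ⊗ I_M) Π^ℓ Δ^s (F_N^† ⊗ I_M)`. -/
def Tmat (M N : ℕ) (ℓ : ℕ) (s : ℝ) : Matrix (Fin (M * N)) (Fin (M * N)) ℂ :=
  FkronI M N * (cyclicShift (M * N)) ^ ℓ * deltaPow (M * N) s * (FkronI M N)ᴴ

lemma FkronI_ne_zero {M N : ℕ} {u v : Fin (M * N)} (h : FkronI M N u v ≠ 0) :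
    (u : ℕ) % M = (v : ℕ) % M := by
  by_contra hc
  exact h (by simp [FkronI, hc])

lemma cyclicShift_pow_ne_zero {K : ℕ} (ℓ : ℕ) {u v : Fin K}
    (h : ((cyclicShift K) ^ ℓ) u v ≠ 0) : ((v : ℕ) + ℓ) % K = u := by
  induction ℓ generalizing u v with
  | zero =>
    rw [pow_zero, Matrix.one_apply] at h
    have : u = v := by by_contra hc; exact h (if_neg hc)
    subst this
    simpa using Nat.mod_eq_of_lt u.isLt
  | succ n ih =>
    rw [pow_succ', Matrix.mul_apply] at h
    obtain ⟨w, -, hw⟩ := Finset.exists_ne_zero_of_sum_ne_zero h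
    have h1 : cyclicShift K u w ≠ 0 := left_ne_zero_of_mul hw
    have h2 : ((cyclicShift K) ^ n) w v ≠ 0 := right_ne_zero_of_mul hw
    have hw1 : ((w : ℕ) + 1) % K = u := by
      by_contra hc; exact h1 (by simp [cyclicShift, hc])
    have hv : ((v : ℕ) + n) % K = w := ih h2
    rw [← hw1, ← hv, Nat.mod_add_mod]
    ring_nf

lemma Tmat_ne_zero {M N : ℕ} (ℓ : ℕ) (s : ℝ) {r x : Fin (M * N)}
    (h : Tmat M N ℓ s r x ≠ 0) : ((x : ℕ) + ℓ) % M = (r : ℕ) % M := by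
  rw [Tmat, Matrix.mul_apply] at h
  obtain ⟨c, -, hc⟩ := Finset.exists_ne_zero_of_sum_ne_zero h
  have hL : (FkronI M N * (cyclicShift (M * N)) ^ ℓ * deltaPow (M * N) s) r c ≠ 0 :=
    left_ne_zero_of_mul hc
  have hR : (FkronI M N)ᴴ c x ≠ 0 := right_ne_zero_of_mul hc
  have hxc : (x : ℕ) % M = (c : ℕ) % M :=
    FkronI_ne_zero (by simpa [Matrix.conjTranspose_apply] using hR)
  rw [Matrix.mul_apply] at hL
  obtain ⟨b, -, hb⟩ := Finset.exists_ne_zero_of_sum_ne_zero hL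
  have hbc : b = c := by
    by_contra hbc
    exact right_ne_zero_of_mul hb (by simp [deltaPow, Matrix.diagonal_apply_ne _ hbc])
  subst hbc
  have hL2 : (FkronI M N * (cyclicShift (M * N)) ^ ℓ) r b ≠ 0 := left_ne_zero_of_mul hb
  rw [Matrix.mul_apply] at hL2
  obtain ⟨a, -, ha⟩ := Finset.exists_ne_zero_of_sum_ne_zero hL2
  have hra : (r : ℕ) % M = (a : ℕ) % M := FkronI_ne_zero (left_ne_zero_of_mul ha)
  have hab : ((b : ℕ) + ℓ) % (M * N) = a := cyclicShift_pow_ne_zero ℓ (right_ne_zero_of_mul ha)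
  have hdvd : M ∣ M * N := Dvd.intro N rfl
  have hxb : ((x : ℕ) + ℓ) % M = ((b : ℕ) + ℓ) % M := Nat.ModEq.add_right ℓ hxc
  calc ((x : ℕ) + ℓ) % M = ((b : ℕ) + ℓ) % M := hxb
    _ = (((b : ℕ) + ℓ) % (M * N)) % M := (Nat.mod_mod_of_dvd _ hdvd).symm
    _ = (a : ℕ) % M := by rw [hab]
    _ = (r : ℕ) % M := hra.symm

/-- **Lemma 2.** If the delay indices `ℓᵢ, ℓⱼ ∈ {0,…,M-1}` of two paths satisfy
`ℓᵢ ≢ ℓⱼ (mod M)`, then every diagonal entry of `T(ℓᵢ,sᵢ)·T(ℓⱼ,sⱼ)^†` vanishes. -/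
theorem diag_Tmat_mul_conjTranspose_eq_zero (M N : ℕ) (hM : 0 < M) (hN : 0 < N)
    (ℓi ℓj ki kj : ℕ) (hℓi : ℓi < M) (hℓj : ℓj < M) (hki : ki < N) (hkj : kj < N)
    (κi κj : ℝ) (hκi₁ : -(1/2) < κi) (hκi₂ : κi < 1/2) (hκj₁ : -(1/2) < κj) (hκj₂ : κj < 1/2)
    (hdiff : ¬ (ℓi ≡ ℓj [MOD M])) :
    ∀ r : Fin (M * N),
      (Tmat M N ℓi ((ki : ℝ) + κi) * (Tmat M N ℓj ((kj : ℝ) + κj))ᴴ) r r = 0 := by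
  intro r
  by_contra h
  rw [Matrix.mul_apply] at h
  obtain ⟨x, -, hx⟩ := Finset.exists_ne_zero_of_sum_ne_zero h
  have h1 : Tmat M N ℓi ((ki : ℝ) + κi) r x ≠ 0 := left_ne_zero_of_mul hx
  have h2 : Tmat M N ℓj ((kj : ℝ) + κj) r x ≠ 0 := by
    have := right_ne_zero_of_mul hx
    rw [Matrix.conjTranspose_apply] at this
    exact fun hz => this (by rw [hz]; simp)
  have c1 := Tmat_ne_zero _ _ h1
  have c2 := Tmat_ne_zero _ _ h2
  apply hdiff
  have : ((x : ℕ) + ℓi) ≡ ((x : ℕ) + ℓj) [MOD M] := by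
    unfold Nat.ModEq; rw [c1, c2]
  simpa using Nat.ModEq.add_left_cancel' (x : ℕ) this

end
end

section
/- Let T_i = T(ℓ_i, s_i) and T_j = T(ℓ_j, s_j) with delay indices ℓ_i, ℓ_j ∈ {0,…,M−1} and real Doppler exponents s_i, s_j (of the form k+κ with k ∈ {0,…,N−1}, κ ∈ (−1/2,1/2)). Then for every row index r ∈ {0,…,MN−1}, the squared modulus of the full row sum equals one: |∑_{r'=0}^{MN−1} [T_i T_j^†]_{(r,r')}|² = 1 (Lemma 3). -/
open Matrix

noncomputable section

/-! Write `A = F_N ⊗ I_M`. The DFT matrix is unitary, hence so is `A`, and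
`Tᵢ Tⱼᴴ = A B Aᴴ` with `B = Π^ℓᵢ Δ^sᵢ (Δ^sⱼ)ᴴ (Π^ℓⱼ)ᴴ`; the row sums of `Tᵢ Tⱼᴴ` are the
entries of `A B Aᴴ 𝟙`. Since the `0`-th column of `F_N` is constantly `1/√N`, `A` maps the
vector `√N · 𝟙_{[0, M)}` to `𝟙`, so `Aᴴ 𝟙 = √N · 𝟙_{[0, M)}`. The matrix `B` moves this block
cyclically by `ℓᵢ - ℓⱼ` and multiplies its entries by unimodular phases. A cyclic block of `M`
consecutive indices meets every residue class mod `M` exactly once (as `M ∣ MN`), and row `r`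
of `A` is supported on the residue class of `r`; so each entry of the result is a single
product `(1/√N) · phase · √N`, of modulus `1`. -/

open Complex
open scoped Kronecker

lemma sum_exp_two_pi_I_mul_div (N : ℕ) [NeZero N] (m : ℤ) :
    ∑ a : Fin N, exp (2 * Real.pi * I * m * a / N) = if (N : ℤ) ∣ m then (N : ℂ) else 0 := by
  have hω : IsPrimitiveRoot (exp (2 * Real.pi * I / N)) N := isPrimitiveRoot_exp N (NeZero.ne N)
  have hterm (a : Fin N) :
      exp (2 * Real.pi * I * m * a / N) = (exp (2 * Real.pi * I / N) ^ m) ^ (a : ℕ) := by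
    rw [← exp_int_mul, ← exp_nat_mul]; ring_nf
  rw [Fintype.sum_congr _ _ hterm]
  generalize exp (2 * Real.pi * I / N) = ω at hω
  have hω_pow_eq_one : ω ^ m = 1 ↔ (N : ℤ) ∣ m := hω.zpow_eq_one_iff_dvd m
  rw [Fin.sum_univ_eq_sum_range ((ω ^ m) ^ ·)]
  split_ifs with h
  · simp [hω_pow_eq_one.mpr h]
  · have hpow : (ω ^ m) ^ N = 1 := by
      rw [← zpow_natCast, ← _root_.zpow_mul, mul_comm, _root_.zpow_mul, zpow_natCast,
        hω.pow_eq_one, _root_.one_zpow]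
    have hgeom := mul_geom_sum (ω ^ m) N
    rw [hpow, sub_self] at hgeom
    exact (mul_eq_zero.mp hgeom).resolve_left (sub_ne_zero.mpr (hω_pow_eq_one.not.mpr h))

def dftMatrix (N : ℕ) : Matrix (Fin N) (Fin N) ℂ := Matrix.of fun a b => dftEntry N a b

lemma star_dftEntry_mul_dftEntry (N a b b' : ℕ) :
    star (dftEntry N a b) * dftEntry N a b' =
      (N : ℂ)⁻¹ * exp (2 * Real.pi * I * ((b : ℤ) - b' : ℤ) * a / N) := by
  simp only [dftEntry, star_mul', Complex.star_def, ← exp_conj, map_div₀, map_mul, map_neg,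
    conj_I, conj_ofReal, map_natCast, map_ofNat]
  rw [mul_mul_mul_comm, ← exp_add, ← ofReal_mul, ← mul_inv, Real.mul_self_sqrt (Nat.cast_nonneg N)]
  push_cast
  ring_nf

lemma dftMatrix_conjTranspose_mul_self (N : ℕ) : (dftMatrix N)ᴴ * dftMatrix N = 1 := by
  ext b b'
  have : NeZero N := ⟨b.pos.ne'⟩
  have hdvd : (N : ℤ) ∣ (b : ℤ) - b' ↔ b = b' := by
    refine ⟨fun h => Fin.ext ?_, fun h => by simp [h]⟩
    have := Int.eq_zero_of_abs_lt_dvd h (by rw [abs_lt]; omega)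
    omega
  simp only [mul_apply, conjTranspose_apply, dftMatrix, of_apply, star_dftEntry_mul_dftEntry,
    ← Finset.mul_sum, sum_exp_two_pi_I_mul_div, hdvd, one_apply]
  split_ifs <;> simp

lemma norm_dftEntry (N a b : ℕ) : ‖dftEntry N a b‖ = (Real.sqrt N)⁻¹ := by
  rw [dftEntry, norm_mul, norm_exp]
  simp

lemma dftEntry_zero_right (N a : ℕ) : dftEntry N a 0 = ((Real.sqrt N)⁻¹ : ℝ) := by
  simp [dftEntry]

/-- `(a, b) ↦ a * M + b`, the indexing convention of `FkronI`. -/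
def blockIndexEquiv (M N : ℕ) : Fin N × Fin M ≃ Fin (M * N) :=
  finProdFinEquiv.trans (finCongr (Nat.mul_comm N M))

lemma FkronI_eq_submatrix_kronecker (M N : ℕ) :
    FkronI M N = (dftMatrix N ⊗ₖ (1 : Matrix (Fin M) (Fin M) ℂ)).submatrix
      (blockIndexEquiv M N).symm (blockIndexEquiv M N).symm := by
  ext u v
  simp [FkronI, blockIndexEquiv, kroneckerMap_apply, dftMatrix, one_apply, Fin.ext_iff]

lemma FkronI_conjTranspose_mul_self (M N : ℕ) : (FkronI M N)ᴴ * FkronI M N = 1 := by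
  rw [FkronI_eq_submatrix_kronecker, conjTranspose_submatrix, submatrix_mul_equiv,
    conjTranspose_kronecker, conjTranspose_one, ← mul_kronecker_mul,
    dftMatrix_conjTranspose_mul_self, Matrix.one_mul, one_kronecker_one, submatrix_one_equiv]

lemma Tmat_mul_conjTranspose_Tmat (M N ℓi ℓj : ℕ) (si sj : ℝ) :
    Tmat M N ℓi si * (Tmat M N ℓj sj)ᴴ = FkronI M N *
      (cyclicShift (M * N) ^ ℓi * deltaPow (M * N) si * (deltaPow (M * N) sj)ᴴ *
        (cyclicShift (M * N) ^ ℓj)ᴴ) * (FkronI M N)ᴴ := by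
  simp only [Tmat, conjTranspose_mul, conjTranspose_conjTranspose, Matrix.mul_assoc]
  rw [← Matrix.mul_assoc (FkronI M N)ᴴ, FkronI_conjTranspose_mul_self, Matrix.one_mul]

theorem Matrix.pow_mulVec_eq_comp_add_nsmul {n α : Type*} [Fintype n] [DecidableEq n]
    [AddMonoid n] [Semiring α] (P : Matrix n n α) (a : n) (hP : ∀ x, P *ᵥ x = fun u => x (u + a))
    (ℓ : ℕ) (x : n → α) : (P ^ ℓ) *ᵥ x = fun u => x (u + ℓ • a) := by
  induction ℓ generalizing x with
  | zero => simp
  | succ ℓ ih => simp [pow_succ, ← mulVec_mulVec, hP, ih, succ_nsmul, add_assoc]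

lemma deltaPow_mulVec (K : ℕ) (s : ℝ) (x : Fin K → ℂ) :
    deltaPow K s *ᵥ x = fun j : Fin K => exp (2 * Real.pi * I * s * (j : ℕ) / K) * x j := by
  ext j
  simp [deltaPow, mulVec_diagonal]

lemma conjTranspose_deltaPow_mulVec (K : ℕ) (s : ℝ) (x : Fin K → ℂ) :
    (deltaPow K s)ᴴ *ᵥ x = fun j : Fin K => star (exp (2 * Real.pi * I * s * (j : ℕ) / K)) * x j := by
  ext j
  simp [deltaPow, diagonal_conjTranspose, mulVec_diagonal]

lemma norm_exp_two_pi_I_mul_div (s : ℝ) (j K : ℕ) : ‖exp (2 * Real.pi * I * s * j / K)‖ = 1 := by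
  rw [norm_exp]
  simp

section CyclicShift

-- Indices are added mod `K`, as the cyclic shift requires.
open Fin.CommRing

variable {K : ℕ} [NeZero K]

lemma cyclicShift_apply (u v : Fin K) : cyclicShift K u v = if u = v + 1 then 1 else 0 := by
  simp [cyclicShift, Fin.ext_iff, Fin.val_add, eq_comm]

lemma cyclicShift_mulVec (x : Fin K → ℂ) : cyclicShift K *ᵥ x = fun u => x (u - 1) := by
  ext u
  simp [mulVec, dotProduct, cyclicShift_apply, ← sub_eq_iff_eq_add]

lemma conjTranspose_cyclicShift_mulVec (x : Fin K → ℂ) :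
    (cyclicShift K)ᴴ *ᵥ x = fun u => x (u + 1) := by
  ext u
  simp [mulVec, dotProduct, cyclicShift_apply]

lemma cyclicShift_pow_mulVec (ℓ : ℕ) (x : Fin K → ℂ) :
    (cyclicShift K ^ ℓ) *ᵥ x = fun u => x (u - (ℓ : Fin K)) := by
  rw [pow_mulVec_eq_comp_add_nsmul _ (-1) fun x => by simp [cyclicShift_mulVec, sub_eq_add_neg]]
  simp [sub_eq_add_neg]

lemma conjTranspose_cyclicShift_pow_mulVec (ℓ : ℕ) (x : Fin K → ℂ) :
    (cyclicShift K ^ ℓ)ᴴ *ᵥ x = fun u => x (u + (ℓ : Fin K)) := by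
  rw [conjTranspose_pow, pow_mulVec_eq_comp_add_nsmul _ 1 conjTranspose_cyclicShift_mulVec]
  simp

lemma cyclicShift_pow_deltaPow_conjTranspose_mulVec (ℓi ℓj : ℕ) (si sj : ℝ) (x : Fin K → ℂ) :
    (cyclicShift K ^ ℓi * deltaPow K si * (deltaPow K sj)ᴴ * (cyclicShift K ^ ℓj)ᴴ) *ᵥ x =
      fun u => exp (2 * Real.pi * I * si * ((u - ℓi : Fin K) : ℕ) / K) *
        star (exp (2 * Real.pi * I * sj * ((u - ℓi : Fin K) : ℕ) / K)) * x (u - (ℓi - ℓj)) := by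
  simp only [← mulVec_mulVec, conjTranspose_cyclicShift_pow_mulVec, conjTranspose_deltaPow_mulVec,
    deltaPow_mulVec, cyclicShift_pow_mulVec, sub_add, mul_assoc]

end CyclicShift

theorem Nat.existsUnique_lt_add_modEq {M : ℕ} (hM : 0 < M) (d r : ℕ) :
    ∃! t, t < M ∧ t + d ≡ r [MOD M] := by
  have hsol : (r + (M - d % M)) % M + d ≡ r [MOD M] := by
    have hd : d % M < M := Nat.mod_lt d hM
    calc (r + (M - d % M)) % M + d ≡ r + (M - d % M) + d % M [MOD M] :=
          (Nat.mod_modEq _ M).add (Nat.mod_modEq d M).symm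
      _ = r + M := by omega
      _ ≡ r [MOD M] := Nat.add_modEq_right
  refine ⟨(r + (M - d % M)) % M, ⟨Nat.mod_lt _ hM, hsol⟩, ?_⟩
  rintro t ⟨ht, htr⟩
  exact (Nat.ModEq.add_right_cancel' d (htr.trans hsol.symm)).eq_of_lt_of_lt ht (Nat.mod_lt _ hM)

def firstBlockVec (M N : ℕ) : Fin (M * N) → ℂ :=
  fun u => if (u : ℕ) < M then (Real.sqrt N : ℂ) else 0

section FirstBlock

open Fin.CommRing

variable {M N : ℕ} [NeZero M] [NeZero N]

lemma FkronI_mulVec_shiftedBlock_apply (c : Fin (M * N) → ℂ) (δ r : Fin (M * N)) :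
    ∃ w : Fin (M * N), ((w - δ : Fin (M * N)) : ℕ) < M ∧
      (FkronI M N *ᵥ fun u => c u * firstBlockVec M N (u - δ)) r =
        dftEntry N (r / M) (w / M) * (c w * Real.sqrt N) := by
  obtain ⟨t, ⟨ht, htr⟩, huniq⟩ := Nat.existsUnique_lt_add_modEq (NeZero.pos M) δ r
  have htK : t < M * N := ht.trans_le (Nat.le_mul_of_pos_right M (NeZero.pos N))
  have hmod (u : Fin (M * N)) : ((u + δ : Fin (M * N)) : ℕ) % M = ((u : ℕ) + δ) % M := by
    rw [Fin.val_add, Nat.mod_mod_of_dvd _ (dvd_mul_right M N)]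
  refine ⟨⟨t, htK⟩ + δ, by simpa using ht, ?_⟩
  rw [mulVec, dotProduct, ← Equiv.sum_comp (Equiv.addRight δ), Finset.sum_eq_single ⟨t, htK⟩]
  · simp [FkronI, firstBlockVec, ht, hmod, show (r : ℕ) % M = (t + δ) % M from htr.symm]
  · intro u _ hu
    have hoff : ¬((u : ℕ) < M ∧ (r : ℕ) % M = (u + δ) % M) :=
      fun h => hu (Fin.ext (huniq u ⟨h.1, h.2.symm⟩))
    simp only [FkronI, firstBlockVec, of_apply, Equiv.coe_addRight, add_sub_cancel_right, hmod]
    split_ifs <;> simp_all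
  · simp

lemma FkronI_mulVec_firstBlockVec : FkronI M N *ᵥ firstBlockVec M N = 1 := by
  ext r
  obtain ⟨w, hw, h⟩ := FkronI_mulVec_shiftedBlock_apply (fun _ => 1) 0 r
  simp only [one_mul, sub_zero] at hw h
  have hN : Real.sqrt N ≠ 0 := by simp [NeZero.ne N]
  rw [h, Nat.div_eq_of_lt hw, dftEntry_zero_right, ← ofReal_mul, inv_mul_cancel₀ hN, ofReal_one,
    Pi.one_apply]

lemma FkronI_conjTranspose_mulVec_one : (FkronI M N)ᴴ *ᵥ 1 = firstBlockVec M N := by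
  rw [← FkronI_mulVec_firstBlockVec, mulVec_mulVec, FkronI_conjTranspose_mul_self, one_mulVec]

lemma norm_FkronI_mulVec_shiftedBlock_apply {c : Fin (M * N) → ℂ} (hc : ∀ u, ‖c u‖ = 1)
    (δ r : Fin (M * N)) : ‖(FkronI M N *ᵥ fun u => c u * firstBlockVec M N (u - δ)) r‖ = 1 := by
  obtain ⟨w, -, h⟩ := FkronI_mulVec_shiftedBlock_apply c δ r
  have hN : Real.sqrt N ≠ 0 := by simp [NeZero.ne N]
  rw [h, norm_mul, norm_mul, norm_dftEntry, hc, Complex.norm_real,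
    Real.norm_of_nonneg (Real.sqrt_nonneg _)]
  field_simp

end FirstBlock

theorem abs_rowSum_Tmat_mul_conjTranspose_eq_one_general (M N : ℕ) (hM : 0 < M) (hN : 0 < N)
    (ℓi ℓj ki kj : ℕ) (κi κj : ℝ) :
    ∀ r : Fin (M * N),
      ‖(∑ r' : Fin (M * N),
        (Tmat M N ℓi ((ki : ℝ) + κi) * (Tmat M N ℓj ((kj : ℝ) + κj))ᴴ) r r')‖ ^ 2 = 1 := by
  intro r
  have : NeZero M := .of_pos hM
  have : NeZero N := .of_pos hN
  have hrowSum (X : Matrix (Fin (M * N)) (Fin (M * N)) ℂ) : ∑ r', X r r' = (X *ᵥ 1) r := by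
    simp [mulVec, dotProduct]
  rw [hrowSum, Tmat_mul_conjTranspose_Tmat, ← mulVec_mulVec, ← mulVec_mulVec,
    FkronI_conjTranspose_mulVec_one, cyclicShift_pow_deltaPow_conjTranspose_mulVec,
    norm_FkronI_mulVec_shiftedBlock_apply (fun u => by
      rw [norm_mul, norm_star, norm_exp_two_pi_I_mul_div, norm_exp_two_pi_I_mul_div, one_mul]),
    one_pow]

/-- **Lemma 3.** For any two delay–Doppler matrices `Tᵢ = T(ℓᵢ,sᵢ)` and `Tⱼ = T(ℓⱼ,sⱼ)`
(with delay indices in `{0,…,M-1}` and Doppler exponents `s = k + κ`,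
`k ∈ {0,…,N-1}`, `κ ∈ (-1/2,1/2)`) and every row index `r`, the squared modulus of
the full row sum of `Tᵢ·Tⱼ^†` equals one. -/
theorem abs_rowSum_Tmat_mul_conjTranspose_eq_one (M N : ℕ) (hM : 0 < M) (hN : 0 < N)
    (ℓi ℓj ki kj : ℕ) (hℓi : ℓi < M) (hℓj : ℓj < M) (hki : ki < N) (hkj : kj < N)
    (κi κj : ℝ) (hκi₁ : -(1/2) < κi) (hκi₂ : κi < 1/2) (hκj₁ : -(1/2) < κj) (hκj₂ : κj < 1/2) :
    ∀ r : Fin (M * N),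
      ‖(∑ r' : Fin (M * N),
        (Tmat M N ℓi ((ki : ℝ) + κi) * (Tmat M N ℓj ((kj : ℝ) + κj))ᴴ) r r')‖ ^ 2 = 1 :=
  abs_rowSum_Tmat_mul_conjTranspose_eq_one_general M N hM hN ℓi ℓj ki kj κi κj

end
end

section
/- Let T_i = T(ℓ_i, s_i) and T_j = T(ℓ_j, s_j) with delay indices ℓ_i, ℓ_j ∈ {0,…,M−1} and real Doppler exponents s_i, s_j. Then the product T_i·T_j^† is supported on a single cyclic diagonal modulo M: for all u, v ∈ {0,…,MN−1}, if v ≢ u + ℓ_j − ℓ_i (mod M) then [T_i T_j^†]_{(u,v)} = 0 (support structure established in the proof of Lemma 2). -/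
open Matrix

noncomputable section

/-!
Grade the indices by their residue modulo `M` and call a matrix supported on the shift `d`
when all its nonzero entries `(u, v)` satisfy `u ≡ v + d`. Shifts add under products and
change sign under conjugate transposition. The factors of `T(ℓ, s)` are supported on the
shifts `0, ℓ, 0, 0` (the DFT acts only on the quotient `u / M`, and `M ∣ MN` makes the cyclic
shift of `Fin (MN)` a shift by `1` modulo `M`), so `T(ℓᵢ, sᵢ) T(ℓⱼ, sⱼ)^†` is supported
on the shift `ℓᵢ - ℓⱼ`.
-/

namespace Matrix

variable {ι α G : Type*}

def SupportedOnShift [Zero α] [Add G] (g : ι → G) (d : G) (A : Matrix ι ι α) : Prop :=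
  ∀ i j, A i j ≠ 0 → g i = g j + d

variable [AddCommGroup G] {g : ι → G}

theorem supportedOnShift_diagonal [DecidableEq ι] [Zero α] (a : ι → α) :
    SupportedOnShift g 0 (diagonal a) := by
  intro i j hij
  rw [diagonal_apply] at hij
  split_ifs at hij with h
  · rw [h, add_zero]
  · exact absurd rfl hij

theorem supportedOnShift_one [DecidableEq ι] [Zero α] [One α] :
    SupportedOnShift g 0 (1 : Matrix ι ι α) :=
  supportedOnShift_diagonal _

namespace SupportedOnShift

theorem mul [Fintype ι] [NonUnitalNonAssocSemiring α] {a b : G} {A B : Matrix ι ι α}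
    (hA : SupportedOnShift g a A) (hB : SupportedOnShift g b B) :
    SupportedOnShift g (a + b) (A * B) := by
  intro i j hij
  obtain ⟨k, -, hk⟩ := Finset.exists_ne_zero_of_sum_ne_zero hij
  rw [hA i k (left_ne_zero_of_mul hk), hB k j (right_ne_zero_of_mul hk)]
  abel

theorem pow [Fintype ι] [DecidableEq ι] [Semiring α] {a : G} {A : Matrix ι ι α}
    (hA : SupportedOnShift g a A) (n : ℕ) : SupportedOnShift g (n • a) (A ^ n) := by
  induction n with
  | zero => simpa using supportedOnShift_one
  | succ n ih => simpa [pow_succ, succ_nsmul] using ih.mul hA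

theorem conjTranspose [AddMonoid α] [StarAddMonoid α] {a : G} {A : Matrix ι ι α}
    (hA : SupportedOnShift g a A) : SupportedOnShift g (-a) Aᴴ := by
  intro i j hij
  rw [conjTranspose_apply, star_ne_zero] at hij
  rw [hA j i hij]
  abel

end SupportedOnShift

end Matrix

theorem ZMod.natCast_mod_of_dvd {M K : ℕ} (h : M ∣ K) (x : ℕ) :
    ((x % K : ℕ) : ZMod M) = x :=
  (ZMod.natCast_eq_natCast_iff' _ _ _).2 (Nat.mod_mod_of_dvd x h)

theorem supportedOnShift_cyclicShift {M K : ℕ} (h : M ∣ K) :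
    SupportedOnShift (fun i : Fin K => ((i : ℕ) : ZMod M)) 1 (cyclicShift K) := by
  intro u v huv
  simp only [cyclicShift, of_apply, ne_eq, ite_eq_right_iff, not_forall] at huv
  obtain ⟨hu, -⟩ := huv
  show ((u : ℕ) : ZMod M) = (v : ℕ) + 1
  rw [← hu, ZMod.natCast_mod_of_dvd h, Nat.cast_add, Nat.cast_one]

theorem supportedOnShift_FkronI (M N : ℕ) :
    SupportedOnShift (fun i : Fin (M * N) => ((i : ℕ) : ZMod M)) 0 (FkronI M N) := by
  intro u v huv
  simp only [FkronI, of_apply, ne_eq, ite_eq_right_iff, not_forall] at huv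
  obtain ⟨huv, -⟩ := huv
  rw [add_zero, ZMod.natCast_eq_natCast_iff']
  exact huv

theorem supportedOnShift_Tmat (M N ℓ : ℕ) (s : ℝ) :
    SupportedOnShift (fun i : Fin (M * N) => ((i : ℕ) : ZMod M)) ℓ (Tmat M N ℓ s) := by
  have hF := supportedOnShift_FkronI M N
  have hpow := (supportedOnShift_cyclicShift (M := M) (dvd_mul_right M N)).pow ℓ
  have hΔ : SupportedOnShift (fun i : Fin (M * N) => ((i : ℕ) : ZMod M)) 0
      (deltaPow (M * N) s) :=
    supportedOnShift_diagonal _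
  rw [Tmat]
  simpa using ((hF.mul hpow).mul hΔ).mul hF.conjTranspose

theorem Tmat_mul_conjTranspose_support_general (M N : ℕ)
    (ℓi ℓj : ℕ) (si sj : ℝ) :
    ∀ u v : Fin (M * N),
      (((v : ℕ) : ZMod M) ≠ ((u : ℕ) : ZMod M) + (ℓj : ZMod M) - (ℓi : ZMod M)) →
      (Tmat M N ℓi si * (Tmat M N ℓj sj)ᴴ) u v = 0 := by
  intro u v hoff
  by_contra hne
  have hshift :=
    (supportedOnShift_Tmat M N ℓi si).mul (supportedOnShift_Tmat M N ℓj sj).conjTranspose u v hne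
  exact hoff (by linear_combination -hshift)

/-- Support structure from the proof of Lemma 2: `T(ℓᵢ,sᵢ)·T(ℓⱼ,sⱼ)^†` is supported
on the single cyclic diagonal `v ≡ u + ℓⱼ - ℓᵢ (mod M)`; every entry off this
diagonal vanishes. -/
theorem Tmat_mul_conjTranspose_support (M N : ℕ) (hM : 0 < M) (hN : 0 < N)
    (ℓi ℓj : ℕ) (hℓi : ℓi < M) (hℓj : ℓj < M) (si sj : ℝ) :
    ∀ u v : Fin (M * N),
      (((v : ℕ) : ZMod M) ≠ ((u : ℕ) : ZMod M) + (ℓj : ZMod M) - (ℓi : ZMod M)) →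
      (Tmat M N ℓi si * (Tmat M N ℓj sj)ᴴ) u v = 0 :=
  Tmat_mul_conjTranspose_support_general M N ℓi ℓj si sj

end
end

section
/- (Corollary 2, uplink power-scaling law.) Let ω, E_u, η, L, γ, K_u be positive real numbers. For each positive integer M_a define R(M_a) = ω·log₂( 1 + ( (E_u/M_a)·η·(M_a·L·γ)² ) / ( (E_u/M_a)·η·M_a·K_u·L·γ + M_a·L·γ ) ). Then as M_a → ∞, R(M_a) converges to ω·log₂(1 + E_u·η·L·γ). -/
open Filter Topology

/-!
With `ρ = E_u/M_a`, the array gain `M_a` in the numerator of the SINR exactly offsets the power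
reduction, so the SINR equals `E_u η L γ / (E_u η K_u / M_a + 1)`. The interference term
`E_u η K_u / M_a` vanishes, the SINR tends to `E_u η L γ`, and `ω log₂(1 + ·)` is continuous there.
-/

lemma sinr_power_scaled_eq (E η L γ K M : ℝ) (hM : M ≠ 0) :
    E / M * η * (M * L * γ) ^ 2 / (E / M * η * M * K * L * γ + M * L * γ) =
      E * η * L * γ / (E * η * K / M + 1) := by
  rcases eq_or_ne (L * γ) 0 with hLγ | hLγ
  · rcases mul_eq_zero.mp hLγ with rfl | rfl <;> simp
  · field_simp

lemma tendsto_sinr_power_scaled (E η L γ K : ℝ) :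
    Tendsto (fun M : ℕ =>
        E / (M : ℝ) * η * ((M : ℝ) * L * γ) ^ 2 /
          (E / (M : ℝ) * η * (M : ℝ) * K * L * γ + (M : ℝ) * L * γ))
      atTop (𝓝 (E * η * L * γ)) := by
  have hinterference : Tendsto (fun M : ℕ => E * η * K / (M : ℝ) + 1) atTop (𝓝 (0 + 1)) :=
    (tendsto_const_div_atTop_nhds_zero_nat _).add_const 1
  have hlimit := (tendsto_const_nhds (x := E * η * L * γ)).div hinterference (by norm_num)
  rw [zero_add, div_one] at hlimit
  refine hlimit.congr' ?_
  filter_upwards [eventually_ne_atTop 0] with M hM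
  exact (sinr_power_scaled_eq E η L γ K M (Nat.cast_ne_zero.mpr hM)).symm

theorem uplink_power_scaling_law_general
    (ω Eu η L γ Ku : ℝ) (hEu : 0 < Eu) (hη : 0 < η)
    (hL : 0 < L) (hγ : 0 < γ) :
    Tendsto (fun Ma : ℕ =>
        ω * Real.logb 2 (1 +
          (Eu / (Ma : ℝ)) * η * ((Ma : ℝ) * L * γ) ^ 2 /
            ((Eu / (Ma : ℝ)) * η * (Ma : ℝ) * Ku * L * γ + (Ma : ℝ) * L * γ)))
      atTop (nhds (ω * Real.logb 2 (1 + Eu * η * L * γ))) := by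
  have hlimit_pos : 0 < 1 + Eu * η * L * γ := by positivity
  exact (((tendsto_sinr_power_scaled Eu η L γ Ku).const_add 1).logb
    hlimit_pos.ne').const_mul ω

/-- **Corollary 2** (uplink power-scaling law). With the uplink power scaled as
`ρ = E_u/M_a`, the uplink SE
`R(M_a) = ω·log₂(1 + ((E_u/M_a)·η·(M_a·L·γ)²)/((E_u/M_a)·η·M_a·K_u·L·γ + M_a·L·γ))`
converges, as `M_a → ∞`, to `ω·log₂(1 + E_u·η·L·γ)`. -/
theorem uplink_power_scaling_law
    (ω Eu η L γ Ku : ℝ) (hω : 0 < ω) (hEu : 0 < Eu) (hη : 0 < η)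
    (hL : 0 < L) (hγ : 0 < γ) (hKu : 0 < Ku) :
    Tendsto (fun Ma : ℕ =>
        ω * Real.logb 2 (1 +
          (Eu / (Ma : ℝ)) * η * ((Ma : ℝ) * L * γ) ^ 2 /
            ((Eu / (Ma : ℝ)) * η * (Ma : ℝ) * Ku * L * γ + (Ma : ℝ) * L * γ)))
      atTop (nhds (ω * Real.logb 2 (1 + Eu * η * L * γ))) :=
  uplink_power_scaling_law_general ω Eu η L γ Ku hEu hη hL hγ
end
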